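/- If A₀ : D(A₀) → H is a strictly positive self-adjoint operator on a Hilbert space H, then the operator A on X = D(A₀^{1/2}) × H, defined by A(w₁, w₂) = (w₂, −A₀ w₁) with domain D(A) = D(A₀) × D(A₀^{1/2}), is skew-adjoint, where X is endowed with the inner product ⟨(u₁,u₂),(v₁,v₂)⟩_X = ⟨A₀^{1/2} u₁, A₀^{1/2} v₁⟩ + ⟨u₂, v₂⟩. -/

import Mathlib

/-!
Everything reduces to the identity `⟪A₀u, y⟫ = ⟪A₀^{1/2}u, A₀^{1/2}y⟫` for `u ∈ D(A₀)`,
`y ∈ D(A₀^{1/2})`. It gives skew-symmetry at once. For the adjoint, testing the adjoint relation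
against `(0, w₂)` shows `⟪A₀u, v₁⟫ = ⟪u, f₂⟫`, and against `(w₁, 0)` shows `⟪A₀u, f₁ + v₂⟫ = 0`,
for all `u ∈ D(A₀)`; maximality of `A₀` then puts `v₁` and `f₁ + v₂` in `D(A₀)` with
`A₀v₁ = f₂` and `A₀(f₁ + v₂) = 0`, and strict positivity forces `f₁ + v₂ = 0`.
-/

section

variable {𝕜 E : Type*} [RCLike 𝕜] [NormedAddCommGroup E] [InnerProductSpace 𝕜 E]

theorem eq_zero_of_coercive_of_apply_eq_zero {T : E →ₗ[𝕜] E} {m : ℝ} (hm : 0 < m) {x : E}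
    (hpos : m * ‖x‖ ^ 2 ≤ RCLike.re (inner 𝕜 (T x) x)) (hx : T x = 0) : x = 0 := by
  rw [hx, inner_zero_left, map_zero] at hpos
  have hsq : ‖x‖ ^ 2 ≤ 0 := nonpos_of_mul_nonpos_right hpos hm
  exact norm_eq_zero.mp (pow_eq_zero_iff two_ne_zero |>.mp (le_antisymm hsq (sq_nonneg _)))

variable {A0 S : E →ₗ[𝕜] E} {D1 Dhalf : Submodule 𝕜 E}

theorem inner_apply_eq_inner_sqrt (hSS : ∀ x ∈ D1, S (S x) = A0 x)
    (hSD1 : ∀ x ∈ D1, S x ∈ Dhalf)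
    (hSsym : ∀ x ∈ Dhalf, ∀ y ∈ Dhalf, inner 𝕜 (S x) y = inner 𝕜 x (S y))
    {u y : E} (hu : u ∈ D1) (hy : y ∈ Dhalf) :
    inner 𝕜 (A0 u) y = inner 𝕜 (S u) (S y) := by
  rw [← hSS u hu, hSsym (S u) (hSD1 u hu) y hy]

theorem wave_energy_inner_skew (hSS : ∀ x ∈ D1, S (S x) = A0 x)
    (hSD1 : ∀ x ∈ D1, S x ∈ Dhalf)
    (hSsym : ∀ x ∈ Dhalf, ∀ y ∈ Dhalf, inner 𝕜 (S x) y = inner 𝕜 x (S y))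
    {w₁ w₂ v₁ v₂ : E} (hw₁ : w₁ ∈ D1) (hw₂ : w₂ ∈ Dhalf) (hv₁ : v₁ ∈ D1) (hv₂ : v₂ ∈ Dhalf) :
    inner 𝕜 (S w₂) (S v₁) + inner 𝕜 (-(A0 w₁)) v₂ =
      -(inner 𝕜 (S w₁) (S v₂) + inner 𝕜 w₂ (-(A0 v₁))) := by
  have h₁ : inner 𝕜 (S w₂) (S v₁) = inner 𝕜 w₂ (A0 v₁) := by
    rw [hSsym w₂ hw₂ (S v₁) (hSD1 v₁ hv₁), hSS v₁ hv₁]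
  rw [inner_neg_left, inner_neg_right, h₁, inner_apply_eq_inner_sqrt hSS hSD1 hSsym hw₁ hv₂]
  ring

theorem wave_adjoint_mem_domain (hD1h : D1 ≤ Dhalf) (hSS : ∀ x ∈ D1, S (S x) = A0 x)
    (hSD1 : ∀ x ∈ D1, S x ∈ Dhalf)
    (hSsym : ∀ x ∈ Dhalf, ∀ y ∈ Dhalf, inner 𝕜 (S x) y = inner 𝕜 x (S y))
    {m : ℝ} (hm : 0 < m) (hpos : ∀ x ∈ D1, m * ‖x‖ ^ 2 ≤ RCLike.re (inner 𝕜 (A0 x) x))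
    (hmaxA : ∀ v f : E, (∀ u ∈ D1, inner 𝕜 (A0 u) v = inner 𝕜 u f) → v ∈ D1 ∧ A0 v = f)
    {v₁ v₂ f₁ f₂ : E} (hv₁ : v₁ ∈ Dhalf) (hf₁ : f₁ ∈ Dhalf)
    (hrel : ∀ w₁ ∈ D1, ∀ w₂ ∈ Dhalf,
      inner 𝕜 (S w₂) (S v₁) + inner 𝕜 (-(A0 w₁)) v₂ = inner 𝕜 (S w₁) (S f₁) + inner 𝕜 w₂ f₂) :
    v₁ ∈ D1 ∧ v₂ ∈ Dhalf ∧ f₁ = -v₂ ∧ f₂ = A0 v₁ := by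
  have htest₂ : ∀ u ∈ D1, inner 𝕜 (A0 u) v₁ = inner 𝕜 u f₂ := fun u hu => by
    simpa [inner_apply_eq_inner_sqrt hSS hSD1 hSsym hu hv₁] using hrel 0 D1.zero_mem u (hD1h hu)
  have htest₁ : ∀ u ∈ D1, inner 𝕜 (A0 u) (f₁ + v₂) = inner 𝕜 u 0 := fun u hu => by
    have h := hrel u hu 0 Dhalf.zero_mem
    simp only [map_zero, inner_zero_left, inner_neg_left, zero_add, add_zero] at h
    rw [inner_add_right, inner_zero_right, inner_apply_eq_inner_sqrt hSS hSD1 hSsym hu hf₁, ← h,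
      neg_add_cancel]
  obtain ⟨hv₁D1, hA0v₁⟩ := hmaxA v₁ f₂ htest₂
  obtain ⟨hsumD1, hA0sum⟩ := hmaxA (f₁ + v₂) 0 htest₁
  have hf₁v₂ : f₁ = -v₂ :=
    eq_neg_of_add_eq_zero_left (eq_zero_of_coercive_of_apply_eq_zero hm (hpos _ hsumD1) hA0sum)
  refine ⟨hv₁D1, ?_, hf₁v₂, hA0v₁.symm⟩
  simpa [hf₁v₂] using Dhalf.neg_mem hf₁

end

theorem stmt15_general {H : Type*} [NormedAddCommGroup H] [InnerProductSpace ℂ H]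
    (A0 S : H →ₗ[ℂ] H) (D1 Dhalf : Submodule ℂ H)
    (hD1h : D1 ≤ Dhalf)
    -- `S = A₀^{1/2}`
    (hSS : ∀ x ∈ D1, S (S x) = A0 x)
    (hSD1 : ∀ x ∈ D1, S x ∈ Dhalf)
    (hSsym : ∀ x ∈ Dhalf, ∀ y ∈ Dhalf, (inner ℂ (S x) y : ℂ) = inner ℂ x (S y))
    -- strict positivity of `A₀`
    (m : ℝ) (hm : 0 < m)
    (hpos : ∀ x ∈ D1, m * ‖x‖ ^ 2 ≤ (inner ℂ (A0 x) x : ℂ).re)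
    -- self-adjointness of `A₀` : symmetry and maximality
    (hmaxA : ∀ v f : H, (∀ u ∈ D1, (inner ℂ (A0 u) v : ℂ) = inner ℂ u f) →
      v ∈ D1 ∧ A0 v = f) :
    -- skew-symmetry of `A` for the energy inner product:
    -- `⟨A(w₁,w₂),(v₁,v₂)⟩_X = −⟨(w₁,w₂),A(v₁,v₂)⟩_X` on `D(A) = D(A₀) × D(A₀^{1/2})`
    (∀ w₁ ∈ D1, ∀ w₂ ∈ Dhalf, ∀ v₁ ∈ D1, ∀ v₂ ∈ Dhalf,
      (inner ℂ (S w₂) (S v₁) : ℂ) + inner ℂ (-(A0 w₁)) v₂ =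
        -((inner ℂ (S w₁) (S v₂) : ℂ) + inner ℂ w₂ (-(A0 v₁)))) ∧
    -- `D(A*) ⊆ D(A)` with `A* = −A` : if `(v₁,v₂)` and `(f₁,f₂)` satisfy the defining
    -- relation of the adjoint, then `(v₁,v₂) ∈ D(A)` and `(f₁,f₂) = −A(v₁,v₂)`
    (∀ v₁ ∈ Dhalf, ∀ (v₂ : H), ∀ f₁ ∈ Dhalf, ∀ (f₂ : H),
      (∀ w₁ ∈ D1, ∀ w₂ ∈ Dhalf,
        (inner ℂ (S w₂) (S v₁) : ℂ) + inner ℂ (-(A0 w₁)) v₂ =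
          (inner ℂ (S w₁) (S f₁) : ℂ) + inner ℂ w₂ f₂) →
      v₁ ∈ D1 ∧ v₂ ∈ Dhalf ∧ f₁ = -v₂ ∧ f₂ = A0 v₁) :=
  ⟨fun _ hw₁ _ hw₂ _ hv₁ _ hv₂ => wave_energy_inner_skew hSS hSD1 hSsym hw₁ hw₂ hv₁ hv₂,
    fun _ hv₁ _ _ hf₁ _ hrel =>
      wave_adjoint_mem_domain hD1h hSS hSD1 hSsym hm hpos hmaxA hv₁ hf₁ hrel⟩

/-- The wave operator `A(w₁,w₂) = (w₂, −A₀w₁)` on `X = D(A₀^{1/2}) × H`, with domain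
`D(A) = D(A₀) × D(A₀^{1/2})` and the energy inner product
`⟨(u₁,u₂),(v₁,v₂)⟩_X = ⟨A₀^{1/2}u₁, A₀^{1/2}v₁⟩ + ⟨u₂,v₂⟩`, is skew-adjoint:
it is skew-symmetric and the graph of its adjoint is contained in the graph of `−A`.
Here `A₀` is strictly positive self-adjoint with square root `S = A₀^{1/2}`. -/
theorem stmt15 {H : Type*} [NormedAddCommGroup H] [InnerProductSpace ℂ H] [CompleteSpace H]
    (A0 S : H →ₗ[ℂ] H) (D1 Dhalf : Submodule ℂ H)
    (hD1h : D1 ≤ Dhalf)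
    (hdense : Dense (Dhalf : Set H))
    -- `S = A₀^{1/2}`
    (hSS : ∀ x ∈ D1, S (S x) = A0 x)
    (hSD1 : ∀ x ∈ D1, S x ∈ Dhalf)
    (hSsym : ∀ x ∈ Dhalf, ∀ y ∈ Dhalf, (inner ℂ (S x) y : ℂ) = inner ℂ x (S y))
    -- strict positivity of `A₀`
    (m : ℝ) (hm : 0 < m)
    (hpos : ∀ x ∈ D1, m * ‖x‖ ^ 2 ≤ (inner ℂ (A0 x) x : ℂ).re)
    -- self-adjointness of `A₀` : symmetry and maximality
    (hsymA : ∀ x ∈ D1, ∀ y ∈ D1, (inner ℂ (A0 x) y : ℂ) = inner ℂ x (A0 y))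
    (hmaxA : ∀ v f : H, (∀ u ∈ D1, (inner ℂ (A0 u) v : ℂ) = inner ℂ u f) →
      v ∈ D1 ∧ A0 v = f) :
    -- skew-symmetry of `A` for the energy inner product:
    -- `⟨A(w₁,w₂),(v₁,v₂)⟩_X = −⟨(w₁,w₂),A(v₁,v₂)⟩_X` on `D(A) = D(A₀) × D(A₀^{1/2})`
    (∀ w₁ ∈ D1, ∀ w₂ ∈ Dhalf, ∀ v₁ ∈ D1, ∀ v₂ ∈ Dhalf,
      (inner ℂ (S w₂) (S v₁) : ℂ) + inner ℂ (-(A0 w₁)) v₂ =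
        -((inner ℂ (S w₁) (S v₂) : ℂ) + inner ℂ w₂ (-(A0 v₁)))) ∧
    -- `D(A*) ⊆ D(A)` with `A* = −A` : if `(v₁,v₂)` and `(f₁,f₂)` satisfy the defining
    -- relation of the adjoint, then `(v₁,v₂) ∈ D(A)` and `(f₁,f₂) = −A(v₁,v₂)`
    (∀ v₁ ∈ Dhalf, ∀ (v₂ : H), ∀ f₁ ∈ Dhalf, ∀ (f₂ : H),
      (∀ w₁ ∈ D1, ∀ w₂ ∈ Dhalf,
        (inner ℂ (S w₂) (S v₁) : ℂ) + inner ℂ (-(A0 w₁)) v₂ =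
          (inner ℂ (S w₁) (S f₁) : ℂ) + inner ℂ w₂ f₂) →
      v₁ ∈ D1 ∧ v₂ ∈ Dhalf ∧ f₁ = -v₂ ∧ f₂ = A0 v₁) :=
  stmt15_general A0 S D1 Dhalf hD1h hSS hSD1 hSsym m hm hpos hmaxA
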